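/- In GF(2)^8 with basis e_1,…,e_8, the quadratic form Q_2(x) = x_1x_8 + x_2x_7 + x_3x_6 + x_4x_5 vanishes on all 27 points of the Segre variety S_{1,1,1}(2) (in the given Segre coordinates), i.e., the Segre variety is contained in the hyperbolic quadric Q_2(x) = 0, which has 135 points. -/
import Mathlib


/-- Index set for coordinates of `V_2 ⊗ V_2 ⊗ V_2` over `GF(2)`. -/
abbrev ι3 := Fin 2 × Fin 2 × Fin 2

/-- `V_8 = V(2,2) ⊗ V(2,2) ⊗ V(2,2)`, realized in coordinates as `GF(2)^(2×2×2)`. -/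
abbrev V8 := ι3 → ZMod 2

/-- The Segre variety `S_{1,1,1}(2)`: the nonzero decomposable tensors `u ⊗ v ⊗ w`. -/
def Segre : Set V8 :=
  {x | x ≠ 0 ∧ ∃ u v w : Fin 2 → ZMod 2, x = fun p => u p.1 * v p.2.1 * w p.2.2}

/-- The quadratic form `Q₂ = x₁x₈ + x₂x₇ + x₃x₆ + x₄x₅` in the Segre coordinates
`x₁ = x₀₀₀, x₂ = x₁₀₀, x₃ = x₁₁₀, x₄ = x₀₁₀, x₅ = x₁₀₁, x₆ = x₀₀₁, x₇ = x₀₁₁, x₈ = x₁₁₁`. -/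
def Q2 (x : V8) : ZMod 2 :=
  x (0, 0, 0) * x (1, 1, 1) + x (1, 0, 0) * x (0, 1, 1) +
    x (1, 1, 0) * x (0, 0, 1) + x (0, 1, 0) * x (1, 0, 1)

set_option maxRecDepth 10000 in
lemma card_aux :
    (Finset.univ.filter (fun x : V8 => x ≠ 0 ∧ Q2 x = 0)).card = 135 := by
  decide

/-- `Q₂` vanishes on the 27 points of the Segre variety: the Segre variety is contained
in the hyperbolic quadric `Q₂(x) = 0`, which has 135 points. -/
theorem stmt14 :
    (∀ x ∈ Segre, Q2 x = 0) ∧ {x : V8 | x ≠ 0 ∧ Q2 x = 0}.ncard = 135 := by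
  constructor
  · rintro x ⟨-, u, v, w, rfl⟩
    simp only [Q2]
    ring_nf
    rw [show (4:ZMod 2) = 0 from rfl]
    ring
  · rw [show {x : V8 | x ≠ 0 ∧ Q2 x = 0} =
        ↑(Finset.univ.filter (fun x : V8 => x ≠ 0 ∧ Q2 x = 0)) by
      ext x; simp]
    rw [Set.ncard_coe_finset]
    exact card_aux
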